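/- arXiv:2012.07054 — 2 statements merged into one kernel-verified Lean document; each statement's English description precedes it below -/
import Mathlib

section
/- Let f : ℝⁿ → ℝ be convex and μ-smooth, A an n×d matrix, λ > 0, S a d×m matrix, and P_S = S(SᵀS)†Sᵀ the orthogonal projector onto the range of S. If α* minimizes α ↦ f(ASα) + (λ/2)‖Sα‖² and y* = ∇f(ASα*), then SᵀSα* = -(1/λ)SᵀAᵀy*, and y* minimizes y ↦ f*(y) + (1/(2λ))‖P_S Aᵀ y‖². -/
open scoped RealInnerProductSpace
open Matrix MeasureTheory ProbabilityTheory

noncomputable section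

abbrev EuclR (n : ℕ) := EuclideanSpace ℝ (Fin n)

def matVec {p q : ℕ} (M : Matrix (Fin p) (Fin q) ℝ) (x : EuclR q) : EuclR p :=
  Matrix.toEuclideanLin M x

def matCLM {p q : ℕ} (M : Matrix (Fin p) (Fin q) ℝ) : EuclR q →L[ℝ] EuclR p :=
  LinearMap.toContinuousLinearMap (Matrix.toEuclideanLin M)

def ranM {p q : ℕ} (M : Matrix (Fin p) (Fin q) ℝ) : Submodule ℝ (EuclR p) :=
  LinearMap.range (Matrix.toEuclideanLin M)

def projOn {p : ℕ} (K : Submodule ℝ (EuclR p)) (x : EuclR p) : EuclR p :=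
  (K.orthogonalProjection x : EuclR p)

def perpCLM {p : ℕ} (K : Submodule ℝ (EuclR p)) : EuclR p →L[ℝ] EuclR p :=
  ContinuousLinearMap.id ℝ (EuclR p) - K.subtypeL.comp (K.orthogonalProjection)

def fconj {p : ℕ} (f : EuclR p → ℝ) (z : EuclR p) : EReal :=
  ⨆ w : EuclR p, ((⟪w, z⟫ - f w : ℝ) : EReal)

def fdom {p : ℕ} (f : EuclR p → ℝ) : Set (EuclR p) := {z | fconj f z ≠ ⊤}

def tcone {p : ℕ} (f : EuclR p → ℝ) (z : EuclR p) : Set (EuclR p) :=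
  {Δ | ∃ t : ℝ, 0 ≤ t ∧ ∃ y ∈ fdom f, Δ = t • (y - z)}

def ZfVal {n d m : ℕ} (f : EuclR n → ℝ) (zs : EuclR n)
    (A : Matrix (Fin n) (Fin d) ℝ) (S : Matrix (Fin d) (Fin m) ℝ) : ℝ :=
  sSup ((fun Δ => ‖matVec Aᵀ Δ - projOn (ranM S) (matVec Aᵀ Δ)‖) ''
    (tcone f zs ∩ Metric.closedBall 0 1))

/-! At the minimizer `α*` the derivative of the sketched primal objective vanishes, which says that
`Aᵀ y* + λ S α*` is orthogonal to the range of `S`; applying `Sᵀ` gives the first claim, and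
projecting gives `P_S Aᵀ y* = -λ S α*`. Since `f` is convex, the gradient inequality turns
Fenchel–Young into an equality at `y* = ∇f(x*)`, `x* = A S α*`, while for every `y` one has
`f*(y) ≥ ⟪x*, y⟫ - f(x*) = ⟪P_S Aᵀ y, S α*⟫ - f(x*)`. The dual optimality of `y*` then reduces
to `0 ≤ ‖P_S Aᵀ y + λ S α*‖²`. -/

section ConvexGradient

variable {E : Type*} [NormedAddCommGroup E] [NormedSpace ℝ E]

theorem ConvexOn.add_fderiv_sub_le {f : E → ℝ} {f' : E →L[ℝ] ℝ} {x : E}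
    (hconv : ConvexOn ℝ Set.univ f) (hf : HasFDerivAt f f' x) (y : E) :
    f x + f' (y - x) ≤ f y := by
  have hline : ConvexOn ℝ Set.univ (f ∘ (AffineMap.lineMap x y : ℝ →ᵃ[ℝ] E)) := by
    simpa using hconv.comp_affineMap (AffineMap.lineMap (k := ℝ) x y)
  have hderiv : HasDerivAt (f ∘ (AffineMap.lineMap x y : ℝ →ᵃ[ℝ] E)) (f' (y - x)) 0 := by
    refine HasFDerivAt.comp_hasDerivAt (0 : ℝ) ?_ AffineMap.hasDerivAt_lineMap
    simpa using hf
  have hslope := hline.le_slope_of_hasDerivAt (Set.mem_univ 0) (Set.mem_univ 1) one_pos hderiv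
  simp only [slope_def_field, Function.comp_apply, AffineMap.lineMap_apply_zero,
    AffineMap.lineMap_apply_one, sub_zero, div_one] at hslope
  linarith

end ConvexGradient

section Stationarity

variable {E F G : Type*} [NormedAddCommGroup E] [NormedSpace ℝ E]
  [NormedAddCommGroup F] [InnerProductSpace ℝ F] [CompleteSpace F]
  [NormedAddCommGroup G] [InnerProductSpace ℝ G]

theorem IsLocalMin.inner_map_add_mul_inner_eq_zero {f : F → ℝ} {g : F}
    (L : E →L[ℝ] F) (M : E →L[ℝ] G) {lam : ℝ} {x : E} (hf : HasGradientAt f g (L x))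
    (hmin : IsLocalMin (fun α => f (L α) + lam / 2 * ‖M α‖ ^ 2) x) (v : E) :
    ⟪g, L v⟫ + lam * ⟪M x, M v⟫ = 0 := by
  have hderiv := (hf.hasFDerivAt.comp x L.hasFDerivAt).add
    ((M.hasFDerivAt.norm_sq).const_mul (lam / 2))
  have h := congrArg (fun φ : E →L[ℝ] ℝ => φ v) (hmin.hasFDerivAt_eq_zero hderiv)
  simp only [_root_.add_apply, ContinuousLinearMap.comp_apply,
    InnerProductSpace.toDual_apply_apply, _root_.smul_apply, innerSL_apply_apply,
    _root_.zero_apply, smul_eq_mul, nsmul_eq_mul] at h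
  linarith

end Stationarity

theorem real_inner_add_norm_sq_div_ge {E : Type*} [NormedAddCommGroup E] [InnerProductSpace ℝ E]
    {lam : ℝ} (hlam : 0 < lam) (p s : E) :
    -(lam / 2 * ‖s‖ ^ 2) ≤ ⟪p, s⟫ + 1 / (2 * lam) * ‖p‖ ^ 2 := by
  have hsq : 0 ≤ ‖p + lam • s‖ ^ 2 := sq_nonneg _
  rw [norm_add_sq_real, norm_smul, real_inner_smul_right, Real.norm_of_nonneg hlam.le] at hsq
  field_simp
  nlinarith

section Matrices

variable {p q r : ℕ}

theorem matVec_mul (M : Matrix (Fin p) (Fin q) ℝ) (N : Matrix (Fin q) (Fin r) ℝ) (x : EuclR r) :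
    matVec (M * N) x = matVec M (matVec N x) := by
  simp [matVec, Matrix.toLpLin_apply, Matrix.mulVec_mulVec]

theorem inner_matVec_transpose (M : Matrix (Fin p) (Fin q) ℝ) (u : EuclR p) (v : EuclR q) :
    ⟪matVec Mᵀ u, v⟫ = ⟪u, matVec M v⟫ := by
  rw [matVec, matVec, ← Matrix.conjTranspose_eq_transpose_of_trivial,
    Matrix.toEuclideanLin_conjTranspose_eq_adjoint, LinearMap.adjoint_inner_left]

theorem mem_orthogonal_ranM_iff (M : Matrix (Fin p) (Fin q) ℝ) (w : EuclR p) :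
    w ∈ (ranM M)ᗮ ↔ matVec Mᵀ w = 0 := by
  constructor
  · intro hw
    have hrange : matVec M (matVec Mᵀ w) ∈ ranM M := LinearMap.mem_range_self _ _
    rw [← inner_self_eq_zero (𝕜 := ℝ), inner_matVec_transpose]
    exact (Submodule.mem_orthogonal' _ _).1 hw _ hrange
  · rintro hw u ⟨v, rfl⟩
    rw [← matVec, real_inner_comm, ← inner_matVec_transpose, hw, inner_zero_left]

end Matrices

theorem matVec_transpose_add_smul_mem_orthogonal_ranM {n d m : ℕ} {f : EuclR n → ℝ} {lam : ℝ}
    {A : Matrix (Fin n) (Fin d) ℝ} {S : Matrix (Fin d) (Fin m) ℝ} {αs : EuclR m} {ys : EuclR n}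
    (hgrad : HasGradientAt f ys (matVec (A * S) αs))
    (hαs : ∀ α, f (matVec (A * S) αs) + lam / 2 * ‖matVec S αs‖ ^ 2
        ≤ f (matVec (A * S) α) + lam / 2 * ‖matVec S α‖ ^ 2) :
    matVec Aᵀ ys + lam • matVec S αs ∈ (ranM S)ᗮ := by
  have hstationary : ∀ v, ⟪ys, matVec (A * S) v⟫ + lam * ⟪matVec S αs, matVec S v⟫ = 0 :=
    IsLocalMin.inner_map_add_mul_inner_eq_zero (matCLM (A * S)) (matCLM S) hgrad
      (Filter.Eventually.of_forall hαs)
  rw [Submodule.mem_orthogonal']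
  rintro _ ⟨v, rfl⟩
  change ⟪_, matVec S v⟫ = 0
  rw [inner_add_left, inner_matVec_transpose, real_inner_smul_left, ← matVec_mul]
  exact hstationary v

theorem projOn_eq_starProjection {p : ℕ} (K : Submodule ℝ (EuclR p)) (x : EuclR p) :
    projOn K x = K.starProjection x := rfl

section Conjugate

variable {p : ℕ}

theorem coe_inner_sub_le_fconj (f : EuclR p → ℝ) (x y : EuclR p) :
    ((⟪x, y⟫ - f x : ℝ) : EReal) ≤ fconj f y :=
  le_iSup (fun w : EuclR p => ((⟪w, y⟫ - f w : ℝ) : EReal)) x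

theorem fconj_eq_of_hasGradientAt {f : EuclR p → ℝ} {x g : EuclR p}
    (hconv : ConvexOn ℝ Set.univ f) (hg : HasGradientAt f g x) :
    fconj f g = ((⟪x, g⟫ - f x : ℝ) : EReal) := by
  refine le_antisymm (iSup_le fun w => EReal.coe_le_coe_iff.mpr ?_) (coe_inner_sub_le_fconj f x g)
  have hsupport := hconv.add_fderiv_sub_le hg.hasFDerivAt w
  rw [InnerProductSpace.toDual_apply_apply, inner_sub_right] at hsupport
  linarith [real_inner_comm g w, real_inner_comm g x]

end Conjugate

theorem fconj_add_norm_projOn_sq_le {n d : ℕ} {f : EuclR n → ℝ} (hconv : ConvexOn ℝ Set.univ f)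
    {lam : ℝ} (hlam : 0 < lam) {K : Submodule ℝ (EuclR d)} {A : Matrix (Fin n) (Fin d) ℝ}
    {s : EuclR d} {ys : EuclR n} (hs : s ∈ K) (hgrad : HasGradientAt f ys (matVec A s))
    (hproj : projOn K (matVec Aᵀ ys) = (-lam) • s) (y : EuclR n) :
    fconj f ys + ((1 / (2 * lam) * ‖projOn K (matVec Aᵀ ys)‖ ^ 2 : ℝ) : EReal)
      ≤ fconj f y + ((1 / (2 * lam) * ‖projOn K (matVec Aᵀ y)‖ ^ 2 : ℝ) : EReal) := by
  set x := matVec A s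
  have hinner : ∀ z, ⟪x, z⟫ = ⟪projOn K (matVec Aᵀ z), s⟫ := fun z => by
    rw [projOn_eq_starProjection, K.inner_starProjection_left_eq_right,
      K.starProjection_eq_self_iff.mpr hs, inner_matVec_transpose, real_inner_comm]
  have hvalue : ⟪x, ys⟫ - f x + 1 / (2 * lam) * ‖projOn K (matVec Aᵀ ys)‖ ^ 2
      = -(lam / 2 * ‖s‖ ^ 2) - f x := by
    rw [hinner, hproj, real_inner_smul_left, real_inner_self_eq_norm_sq, norm_smul,
      Real.norm_eq_abs, abs_neg, abs_of_pos hlam]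
    field_simp
    ring
  calc fconj f ys + ((1 / (2 * lam) * ‖projOn K (matVec Aᵀ ys)‖ ^ 2 : ℝ) : EReal)
      = ((-(lam / 2 * ‖s‖ ^ 2) - f x : ℝ) : EReal) := by
        rw [fconj_eq_of_hasGradientAt hconv hgrad, ← EReal.coe_add, hvalue]
    _ ≤ ((⟪x, y⟫ - f x + 1 / (2 * lam) * ‖projOn K (matVec Aᵀ y)‖ ^ 2 : ℝ) : EReal) := by
        rw [EReal.coe_le_coe_iff, hinner]
        linarith [real_inner_add_norm_sq_div_ge hlam (projOn K (matVec Aᵀ y)) s]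
    _ ≤ fconj f y + ((1 / (2 * lam) * ‖projOn K (matVec Aᵀ y)‖ ^ 2 : ℝ) : EReal) := by
        rw [EReal.coe_add]
        gcongr
        exact coe_inner_sub_le_fconj f x y

theorem sketched_fenchel_duality_general (n d m : ℕ) (f : EuclR n → ℝ) (lam : ℝ)
    (hlam : 0 < lam)
    (hconv : ConvexOn ℝ Set.univ f)
    (hdiff : ∀ x, HasGradientAt f (gradient f x) x)
    (A : Matrix (Fin n) (Fin d) ℝ) (S : Matrix (Fin d) (Fin m) ℝ)
    (αs : EuclR m)
    (hαs : ∀ α, f (matVec (A * S) αs) + lam / 2 * ‖matVec S αs‖ ^ 2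
        ≤ f (matVec (A * S) α) + lam / 2 * ‖matVec S α‖ ^ 2)
    (ys : EuclR n) (hys : ys = gradient f (matVec (A * S) αs)) :
    matVec (Sᵀ * S) αs = (-(1 / lam)) • matVec (Sᵀ * Aᵀ) ys ∧
    (∀ y, fconj f ys + ((1 / (2 * lam) * ‖projOn (ranM S) (matVec Aᵀ ys)‖ ^ 2 : ℝ) : EReal)
        ≤ fconj f y + ((1 / (2 * lam) * ‖projOn (ranM S) (matVec Aᵀ y)‖ ^ 2 : ℝ) : EReal)) := by
  set s := matVec S αs
  have hgrad : HasGradientAt f ys (matVec (A * S) αs) := hys ▸ hdiff _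
  have hperp : matVec Aᵀ ys + lam • s ∈ (ranM S)ᗮ :=
    matVec_transpose_add_smul_mem_orthogonal_ranM hgrad hαs
  have hnormal : matVec Sᵀ (matVec Aᵀ ys) + lam • matVec Sᵀ s = 0 := by
    simpa only [matVec, map_add, map_smul] using (mem_orthogonal_ranM_iff S _).1 hperp
  have hs : s ∈ ranM S := ⟨αs, rfl⟩
  refine ⟨?_, fconj_add_norm_projOn_sq_le hconv hlam hs
    (by rwa [matVec_mul] at hgrad) ?_⟩
  · rw [matVec_mul, matVec_mul]
    calc matVec Sᵀ s = (1 / lam) • (lam • matVec Sᵀ s) := by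
          rw [smul_smul, one_div_mul_cancel hlam.ne', one_smul]
      _ = (-(1 / lam)) • matVec Sᵀ (matVec Aᵀ ys) := by
          rw [eq_neg_of_add_eq_zero_right hnormal, smul_neg, neg_smul]
  · exact Submodule.eq_starProjection_of_mem_orthogonal' (Submodule.smul_mem _ _ hs)
      hperp (by module)

/-- KKT conditions of the sketched primal and optimality of the sketched dual. -/
theorem sketched_fenchel_duality (n d m : ℕ) (f : EuclR n → ℝ) (μ lam : ℝ)
    (hμ : 0 < μ) (hlam : 0 < lam)
    (hconv : ConvexOn ℝ Set.univ f)
    (hdiff : ∀ x, HasGradientAt f (gradient f x) x)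
    (hsmooth : ∀ x y, ‖gradient f y - gradient f x‖ ≤ μ * ‖y - x‖)
    (A : Matrix (Fin n) (Fin d) ℝ) (S : Matrix (Fin d) (Fin m) ℝ)
    (αs : EuclR m)
    (hαs : ∀ α, f (matVec (A * S) αs) + lam / 2 * ‖matVec S αs‖ ^ 2
        ≤ f (matVec (A * S) α) + lam / 2 * ‖matVec S α‖ ^ 2)
    (ys : EuclR n) (hys : ys = gradient f (matVec (A * S) αs)) :
    matVec (Sᵀ * S) αs = (-(1 / lam)) • matVec (Sᵀ * Aᵀ) ys ∧
    (∀ y, fconj f ys + ((1 / (2 * lam) * ‖projOn (ranM S) (matVec Aᵀ ys)‖ ^ 2 : ℝ) : EReal)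
        ≤ fconj f y + ((1 / (2 * lam) * ‖projOn (ranM S) (matVec Aᵀ y)‖ ^ 2 : ℝ) : EReal)) :=
  sketched_fenchel_duality_general n d m f lam hlam hconv hdiff A S αs hαs ys hys
end
end

section
/- Let f : ℝⁿ → ℝ be convex and L-Lipschitz (not necessarily differentiable), A an n×d matrix, λ > 0, and S a d×m matrix with projector P_S. Let z* be a minimizer of z ↦ f*(z) + (1/(2λ))‖Aᵀz‖² and y* a minimizer of y ↦ f*(y) + (1/(2λ))‖P_S Aᵀ y‖². Set x* = -(1/λ)Aᵀz* and x̂¹ = -(1/λ)Aᵀy*, and Z_f = sup{‖P_S^⊥ Aᵀ Δ‖ : Δ ∈ T_{z*} ∩ B₂ⁿ}. Then ‖x̂¹ - x*‖ ≤ (2L/λ)·√(Z_f² + (1/2)·Z_f·‖P_S^⊥ Aᵀ‖₂) ≤ √6·(L/λ)·‖P_S^⊥ Aᵀ‖₂. -/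
open scoped RealInnerProductSpace
open Matrix MeasureTheory ProbabilityTheory

noncomputable section

/-!
Write `B = Aᵀ`, `P = P_S`, `P⊥ = 1 - P` and `Δ = y* - z*`. Comparing each minimizer with the
points of the segment `[z*, y*]`, and using that `f*` is convex along it, gives after letting the
step tend to `0` the monotonicity inequality `⟪P B y*, P B Δ⟫ ≤ ⟪B z*, B Δ⟫`; hence
`‖B Δ‖² ≤ ⟪P⊥ B Δ, P⊥ B y*⟫ ≤ ‖P⊥ B Δ‖ ‖P⊥ B y*‖`. Lipschitzness puts `dom f*` in the ball of
radius `L`, so `‖P⊥ B Δ‖ ≤ ‖Δ‖ Z_f ≤ 2 L Z_f` (as `Δ / ‖Δ‖ ∈ T_{z*} ∩ B₂`) and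
`‖P⊥ B y*‖ ≤ 2 L Z_f + L ‖P⊥ B‖`. Both minimizers lie in `dom f*` because `f`, being convex and
continuous, has an affine minorant, so `f*` is finite somewhere.
-/

section Conjugate

variable {p : ℕ} {f : EuclR p → ℝ}

variable (f) in
lemma inner_sub_le_fconj (z w : EuclR p) :
    ((⟪w, z⟫ - f w : ℝ) : EReal) ≤ fconj f z :=
  le_iSup (fun w => ((⟪w, z⟫ - f w : ℝ) : EReal)) w

variable (f) in
lemma fconj_ne_bot (z : EuclR p) : fconj f z ≠ ⊥ :=
  ne_bot_of_le_ne_bot (EReal.coe_ne_bot _) (inner_sub_le_fconj f z 0)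

lemma coe_toReal_fconj {z : EuclR p} (hz : fconj f z ≠ ⊤) :
    ((fconj f z).toReal : EReal) = fconj f z :=
  EReal.coe_toReal hz (fconj_ne_bot f z)

lemma inner_sub_le_toReal_fconj {z : EuclR p} (hz : fconj f z ≠ ⊤) (w : EuclR p) :
    ⟪w, z⟫ - f w ≤ (fconj f z).toReal := by
  rw [← EReal.coe_le_coe_iff, coe_toReal_fconj hz]
  exact inner_sub_le_fconj f z w

lemma exists_fconj_ne_top (hconv : ConvexOn ℝ Set.univ f) (hf : LowerSemicontinuous f) :
    ∃ g : EuclR p, fconj f g ≠ ⊤ := by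
  obtain ⟨l, c, hlc, -⟩ := hconv.exists_affine_le_of_lt (𝕜 := ℝ) (Set.mem_univ 0)
    (sub_one_lt (f 0)) isClosed_univ (hf.lowerSemicontinuousOn _)
  refine ⟨(InnerProductSpace.toDual ℝ (EuclR p)).symm l, ne_top_of_le_ne_top
    (EReal.coe_ne_top (-c)) (iSup_le fun w => EReal.coe_le_coe_iff.2 ?_)⟩
  have := hlc ⟨w, Set.mem_univ w⟩
  simp only [Set.domRestrict_apply, Pi.add_apply, Function.comp_apply, RCLike.re_to_real,
    Function.const_apply] at this
  rw [real_inner_comm, InnerProductSpace.toDual_symm_apply]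
  linarith

lemma norm_le_of_fconj_ne_top {L : ℝ} (hL : 0 ≤ L) (hLip : ∀ x y, |f x - f y| ≤ L * ‖x - y‖)
    {z : EuclR p} (hz : fconj f z ≠ ⊤) : ‖z‖ ≤ L := by
  by_contra! hzL
  have hpos : 0 < ‖z‖ * (‖z‖ - L) := mul_pos (hL.trans_lt hzL) (sub_pos.2 hzL)
  have hray : ∀ s : ℝ, 0 ≤ s → s * (‖z‖ * (‖z‖ - L)) ≤ (fconj f z).toReal + f 0 := by
    intro s hs
    have hf := (abs_le.1 (hLip (s • z) 0)).2
    have := inner_sub_le_toReal_fconj hz (s • z)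
    rw [sub_zero, norm_smul, Real.norm_of_nonneg hs] at hf
    rw [real_inner_smul_left, real_inner_self_eq_norm_sq] at this
    nlinarith
  obtain ⟨s, hlt, hs⟩ := (((Filter.tendsto_id.atTop_mul_const hpos).eventually_gt_atTop
    ((fconj f z).toReal + f 0)).and (Filter.eventually_ge_atTop 0)).exists
  exact (hray s hs).not_gt hlt

lemma fconj_add_smul_sub_le {a b : EuclR p} (ha : fconj f a ≠ ⊤) (hb : fconj f b ≠ ⊤)
    {t : ℝ} (ht0 : 0 ≤ t) (ht1 : t ≤ 1) :
    fconj f (a + t • (b - a)) ≤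
      (((1 - t) * (fconj f a).toReal + t * (fconj f b).toReal : ℝ) : EReal) := by
  refine iSup_le fun w => EReal.coe_le_coe_iff.2 ?_
  rw [inner_add_right, real_inner_smul_right, inner_sub_right]
  nlinarith [inner_sub_le_toReal_fconj ha w, inner_sub_le_toReal_fconj hb w]

lemma fconj_ne_top_of_forall_le (q : EuclR p → ℝ) (hdom : ∃ g, fconj f g ≠ ⊤) {a : EuclR p}
    (ha : ∀ z, fconj f a + (q a : EReal) ≤ fconj f z + q z) : fconj f a ≠ ⊤ := by
  obtain ⟨g, hg⟩ := hdom
  intro htop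
  have := ha g
  rw [htop, EReal.top_add_coe, top_le_iff] at this
  exact (EReal.add_lt_top hg (EReal.coe_ne_top _)).ne this

lemma add_le_add_of_forall_fconj_add_le {q₁ q₂ : EuclR p → ℝ} {a b : EuclR p}
    (ha : ∀ z, fconj f a + (q₁ a : EReal) ≤ fconj f z + q₁ z)
    (hb : ∀ z, fconj f b + (q₂ b : EReal) ≤ fconj f z + q₂ z)
    (ha' : fconj f a ≠ ⊤) (hb' : fconj f b ≠ ⊤) {t : ℝ} (ht0 : 0 ≤ t) (ht1 : t ≤ 1) :
    q₁ a + q₂ b ≤ q₁ (a + t • (b - a)) + q₂ (b + t • (a - b)) := by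
  have h₁ := (ha _).trans (add_le_add_left (fconj_add_smul_sub_le ha' hb' ht0 ht1) _)
  have h₂ := (hb _).trans (add_le_add_left (fconj_add_smul_sub_le hb' ha' ht0 ht1) _)
  rw [← coe_toReal_fconj ha', ← EReal.coe_add, ← EReal.coe_add, EReal.coe_le_coe_iff,
    EReal.toReal_coe] at h₁
  rw [← coe_toReal_fconj hb', ← EReal.coe_add, ← EReal.coe_add, EReal.coe_le_coe_iff,
    EReal.toReal_coe] at h₂
  linarith

end Conjugate

lemma nonneg_of_forall_Ioc_nonneg_add_mul {x K : ℝ}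
    (h : ∀ t ∈ Set.Ioc (0 : ℝ) 1, 0 ≤ x + t * K) : 0 ≤ x := by
  have hcont : Continuous fun t : ℝ => x + t * K := by fun_prop
  have hlim : Filter.Tendsto (fun t : ℝ => x + t * K) (nhdsWithin 0 (Set.Ioi 0)) (nhds x) := by
    simpa using (hcont.tendsto 0).mono_left nhdsWithin_le_nhds
  exact ge_of_tendsto hlim (Filter.eventually_of_mem (Ioc_mem_nhdsGT one_pos) h)

section InnerProduct

variable {E F G : Type*} [NormedAddCommGroup E] [InnerProductSpace ℝ E]
  [NormedAddCommGroup F] [InnerProductSpace ℝ F] [NormedAddCommGroup G] [InnerProductSpace ℝ G]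

lemma inner_le_inner_of_forall_sq_norm_le (B : E →L[ℝ] F) (C : E →L[ℝ] G) {a b : E} {c : ℝ}
    (hc : 0 < c) (h : ∀ t ∈ Set.Ioc (0 : ℝ) 1, c * ‖B a‖ ^ 2 + c * ‖C b‖ ^ 2 ≤
      c * ‖B (a + t • (b - a))‖ ^ 2 + c * ‖C (b + t • (a - b))‖ ^ 2) :
    ⟪C b, C b - C a⟫ ≤ ⟪B a, B b - B a⟫ := by
  refine sub_nonneg.1 (nonneg_of_forall_Ioc_nonneg_add_mul
    (K := (‖B b - B a‖ ^ 2 + ‖C b - C a‖ ^ 2) / 2) fun t ht => ?_)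
  have hct : 0 < c * t := mul_pos hc ht.1
  have hsq := h t ht
  rw [map_add, map_add, map_smul, map_smul, map_sub, map_sub, ← neg_sub (C b), smul_neg,
    ← sub_eq_add_neg, norm_add_sq_real, norm_sub_sq_real, real_inner_smul_right,
    real_inner_smul_right, norm_smul, norm_smul, Real.norm_of_nonneg ht.1.le] at hsq
  refine (mul_nonneg_iff_of_pos_left hct).1 ?_
  linarith

variable (K : Submodule ℝ F) [K.HasOrthogonalProjection]

lemma inner_sub_starProjection_sub_starProjection (u v : F) :
    ⟪u - K.starProjection u, v - K.starProjection v⟫ =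
      ⟪u, v⟫ - ⟪K.starProjection u, K.starProjection v⟫ := by
  have h₁ := K.starProjection_inner_eq_zero u _ (K.starProjection_apply_mem v)
  have h₂ := K.starProjection_inner_eq_zero v _ (K.starProjection_apply_mem u)
  rw [inner_sub_left] at h₁ h₂
  rw [inner_sub_left, inner_sub_right, inner_sub_right]
  linarith [real_inner_comm v (K.starProjection u),
    real_inner_comm (K.starProjection v) (K.starProjection u)]

lemma sq_norm_sub_le_inner_sub_starProjection {x y : F}
    (h : ⟪K.starProjection y, K.starProjection y - K.starProjection x⟫ ≤ ⟪x, y - x⟫) :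
    ‖y - x‖ ^ 2 ≤ ⟪(y - K.starProjection y) - (x - K.starProjection x),
      y - K.starProjection y⟫ := by
  have hsplit := inner_sub_starProjection_sub_starProjection K (y - x) y
  rw [map_sub, sub_sub_sub_comm] at hsplit
  rw [hsplit, ← real_inner_self_eq_norm_sq, real_inner_comm (K.starProjection y)]
  have : ⟪y - x, y - x⟫ = ⟪y - x, y⟫ - ⟪x, y - x⟫ := by
    rw [inner_sub_right _ y x, real_inner_comm x]
  linarith

end InnerProduct

lemma inner_starProjection_le_of_forall_fconj_add_le {p q : ℕ} {f : EuclR p → ℝ}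
    (B : EuclR p →L[ℝ] EuclR q) (K : Submodule ℝ (EuclR q)) {c : ℝ} (hc : 0 < c)
    {a b : EuclR p} (ha' : fconj f a ≠ ⊤) (hb' : fconj f b ≠ ⊤)
    (ha : ∀ z, fconj f a + ((c * ‖B a‖ ^ 2 : ℝ) : EReal) ≤
      fconj f z + ((c * ‖B z‖ ^ 2 : ℝ) : EReal))
    (hb : ∀ z, fconj f b + ((c * ‖K.starProjection (B b)‖ ^ 2 : ℝ) : EReal) ≤
      fconj f z + ((c * ‖K.starProjection (B z)‖ ^ 2 : ℝ) : EReal)) :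
    ⟪K.starProjection (B b), K.starProjection (B b) - K.starProjection (B a)⟫ ≤
      ⟪B a, B b - B a⟫ :=
  inner_le_inner_of_forall_sq_norm_le B (K.starProjection ∘L B) hc fun _ ht =>
    add_le_add_of_forall_fconj_add_le (q₁ := fun z => c * ‖B z‖ ^ 2)
      (q₂ := fun z => c * ‖K.starProjection (B z)‖ ^ 2) ha hb ha' hb' ht.1.le ht.2

section NormSup

variable {E F : Type*} [NormedAddCommGroup E] [NormedSpace ℝ E]
  [NormedAddCommGroup F] [NormedSpace ℝ F] (T : E →L[ℝ] F) {s : Set E}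

lemma opNorm_mem_upperBounds_image_norm (hs : s ⊆ Metric.closedBall 0 1) :
    ‖T‖ ∈ upperBounds ((fun Δ => ‖T Δ‖) '' s) := by
  rintro _ ⟨Δ, hΔ, rfl⟩
  simpa using T.le_opNorm_of_le (mem_closedBall_zero_iff.1 (hs hΔ))

lemma sSup_image_norm_le_opNorm (hs : s ⊆ Metric.closedBall 0 1) :
    sSup ((fun Δ => ‖T Δ‖) '' s) ≤ ‖T‖ :=
  Real.sSup_le (fun _ hr => opNorm_mem_upperBounds_image_norm T hs hr) (norm_nonneg T)

lemma norm_apply_le_mul_sSup_image_norm (hs : s ⊆ Metric.closedBall 0 1) {Δ : E}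
    (hΔ : ‖Δ‖⁻¹ • Δ ∈ s) : ‖T Δ‖ ≤ ‖Δ‖ * sSup ((fun Δ => ‖T Δ‖) '' s) := by
  rcases eq_or_ne Δ 0 with rfl | hΔ0
  · simp
  calc ‖T Δ‖ = ‖Δ‖ * ‖T (‖Δ‖⁻¹ • Δ)‖ := by
        rw [map_smul, norm_smul, norm_inv, norm_norm,
          mul_inv_cancel_left₀ (norm_ne_zero_iff.2 hΔ0)]
    _ ≤ _ := mul_le_mul_of_nonneg_left
        (le_csSup ⟨‖T‖, opNorm_mem_upperBounds_image_norm T hs⟩ ⟨_, hΔ, rfl⟩)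
        (norm_nonneg _)

lemma norm_sub_mul_norm_le {y z : E} {L Z : ℝ} (hL : 0 ≤ L) (hZ : 0 ≤ Z)
    (hz : ‖z‖ ≤ L) (hyz : ‖T y - T z‖ ≤ 2 * L * Z) :
    ‖T y - T z‖ * ‖T y‖ ≤ (2 * L) ^ 2 * (Z ^ 2 + 1 / 2 * Z * ‖T‖) := by
  have hy : ‖T y‖ ≤ 2 * L * Z + ‖T‖ * L :=
    calc ‖T y‖ = ‖(T y - T z) + T z‖ := by rw [sub_add_cancel]
      _ ≤ 2 * L * Z + ‖T‖ * L :=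
        (norm_add_le _ _).trans (add_le_add hyz (T.le_opNorm_of_le hz))
  calc ‖T y - T z‖ * ‖T y‖ ≤ (2 * L * Z) * (2 * L * Z + ‖T‖ * L) :=
        mul_le_mul hyz hy (norm_nonneg _) (by positivity)
    _ = (2 * L) ^ 2 * (Z ^ 2 + 1 / 2 * Z * ‖T‖) := by ring

end NormSup

lemma inv_norm_smul_sub_mem_tcone_inter_closedBall {p : ℕ} {f : EuclR p → ℝ} {y : EuclR p}
    (hy : y ∈ fdom f) (z : EuclR p) :
    ‖y - z‖⁻¹ • (y - z) ∈ tcone f z ∩ Metric.closedBall 0 1 := by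
  refine ⟨⟨_, inv_nonneg.2 (norm_nonneg _), y, hy, rfl⟩, ?_⟩
  rw [mem_closedBall_zero_iff, norm_smul, norm_inv, norm_norm]
  exact inv_mul_le_one_of_le₀ le_rfl (norm_nonneg _)

lemma two_mul_sqrt_le_sqrt_six_mul {Z N : ℝ} (hZ : 0 ≤ Z) (hZN : Z ≤ N) :
    2 * √(Z ^ 2 + 1 / 2 * Z * N) ≤ √6 * N := by
  have hN : 0 ≤ N := hZ.trans hZN
  calc 2 * √(Z ^ 2 + 1 / 2 * Z * N) ≤ 2 * √(3 / 2 * N ^ 2) := by gcongr; nlinarith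
    _ = √6 * N := by
      rw [Real.sqrt_mul' _ (sq_nonneg N), Real.sqrt_sq hN,
        show (6 : ℝ) = 2 ^ 2 * (3 / 2) by norm_num, Real.sqrt_mul (sq_nonneg 2),
        Real.sqrt_sq zero_le_two]
      ring

/-- deterministic recovery bound for non-smooth objectives. -/
theorem nonsmooth_recovery (n d m : ℕ) (f : EuclR n → ℝ)
    (hconv : ConvexOn ℝ Set.univ f) (L lam : ℝ) (hL : 0 ≤ L) (hlam : 0 < lam)
    (hLip : ∀ x y, |f x - f y| ≤ L * ‖x - y‖)
    (A : Matrix (Fin n) (Fin d) ℝ) (S : Matrix (Fin d) (Fin m) ℝ)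
    (zs ys : EuclR n)
    (hzs : ∀ z, fconj f zs + ((1 / (2 * lam) * ‖matVec Aᵀ zs‖ ^ 2 : ℝ) : EReal)
        ≤ fconj f z + ((1 / (2 * lam) * ‖matVec Aᵀ z‖ ^ 2 : ℝ) : EReal))
    (hys : ∀ y, fconj f ys + ((1 / (2 * lam) * ‖projOn (ranM S) (matVec Aᵀ ys)‖ ^ 2 : ℝ) : EReal)
        ≤ fconj f y + ((1 / (2 * lam) * ‖projOn (ranM S) (matVec Aᵀ y)‖ ^ 2 : ℝ) : EReal))
    (xs x1 : EuclR d)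
    (hxs : xs = (-(1 / lam)) • matVec Aᵀ zs)
    (hx1 : x1 = (-(1 / lam)) • matVec Aᵀ ys) :
    ‖x1 - xs‖ ≤ 2 * (L / lam) *
        Real.sqrt ((ZfVal f zs A S) ^ 2
          + 1 / 2 * ZfVal f zs A S * ‖(perpCLM (ranM S)).comp (matCLM Aᵀ)‖) ∧
    2 * (L / lam) *
        Real.sqrt ((ZfVal f zs A S) ^ 2
          + 1 / 2 * ZfVal f zs A S * ‖(perpCLM (ranM S)).comp (matCLM Aᵀ)‖)
      ≤ Real.sqrt 6 * (L / lam) * ‖(perpCLM (ranM S)).comp (matCLM Aᵀ)‖ := by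
  set B := matCLM Aᵀ
  set T := (perpCLM (ranM S)).comp B
  set Z := ZfVal f zs A S
  have hdom : ∃ g, fconj f g ≠ ⊤ := exists_fconj_ne_top hconv
    (LipschitzWith.of_dist_le' fun x y => by
      simpa only [dist_eq_norm, Real.norm_eq_abs] using hLip x y).continuous.lowerSemicontinuous
  have hz : zs ∈ fdom f :=
    fconj_ne_top_of_forall_le (fun z => 1 / (2 * lam) * ‖B z‖ ^ 2) hdom hzs
  have hy : ys ∈ fdom f := fconj_ne_top_of_forall_le
    (fun y => 1 / (2 * lam) * ‖projOn (ranM S) (B y)‖ ^ 2) hdom hys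
  have hzL := norm_le_of_fconj_ne_top hL hLip hz
  have hΔ : ‖ys - zs‖ ≤ 2 * L := by
    linarith [norm_sub_le ys zs, norm_le_of_fconj_ne_top hL hLip hy]
  have hkey : ‖B ys - B zs‖ ^ 2 ≤ ‖T ys - T zs‖ * ‖T ys‖ :=
    (sq_norm_sub_le_inner_sub_starProjection _ (inner_starProjection_le_of_forall_fconj_add_le
      B (ranM S) (by positivity) hz hy hzs hys)).trans (real_inner_le_norm _ _)
  have hZ0 : 0 ≤ Z := Real.sSup_nonneg (by rintro _ ⟨_, _, rfl⟩; exact norm_nonneg _)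
  have hZT : Z ≤ ‖T‖ := sSup_image_norm_le_opNorm T Set.inter_subset_right
  have hTΔ : ‖T ys - T zs‖ ≤ 2 * L * Z := by
    rw [← map_sub]
    exact (norm_apply_le_mul_sSup_image_norm T Set.inter_subset_right
      (inv_norm_smul_sub_mem_tcone_inter_closedBall hy zs)).trans
      (mul_le_mul_of_nonneg_right hΔ hZ0)
  have hB : ‖B ys - B zs‖ ≤ 2 * L * √(Z ^ 2 + 1 / 2 * Z * ‖T‖) := by
    rw [← Real.sqrt_sq (by positivity : 0 ≤ 2 * L), ← Real.sqrt_mul (sq_nonneg _)]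
    exact Real.le_sqrt_of_sq_le (hkey.trans (norm_sub_mul_norm_le T hL hZ0 hzL hTΔ))
  have hx : ‖x1 - xs‖ = 1 / lam * ‖B ys - B zs‖ := by
    rw [hx1, hxs, ← smul_sub, norm_smul, norm_neg, Real.norm_of_nonneg (by positivity)]
    rfl
  refine ⟨?_, ?_⟩
  · calc ‖x1 - xs‖ ≤ 1 / lam * (2 * L * √(Z ^ 2 + 1 / 2 * Z * ‖T‖)) := by
          rw [hx]; gcongr
      _ = _ := by ring
  · linarith [mul_le_mul_of_nonneg_left (two_mul_sqrt_le_sqrt_six_mul hZ0 hZT)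
      (by positivity : 0 ≤ L / lam)]
end
end
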